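/- The translated formula φ is intuitionistically provable if and only if P entails Ω under stable model semantics, where φ = ψ₁ → ⋯ → ψ_d → ⊙ and ψ₁,…,ψ_d are the axioms of the construction. -/

import Mathlib

/-!
Soundness: minimal logic is sound for two-valued valuations, and a stable model omitting `Ω`
gives a valuation satisfying every axiom and falsifying `⊙` (`TR.countermodel`).

Completeness: the axioms (1) let a proof of `⊙` split on each atom of the finite program, so it
suffices to derive `⊙` from `Γ_M` for every `M`. If `Ω ∈ M`, use `Ω → ⊙`. Otherwise `M` is not
stable. An atom of `I(P,M) \ M` gives `A`, since `R!(ā) → •` is derivable along the derivation of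
`R(ā)` in the reduct. An atom of `M \ I(P,M)` gives `B`, since `R?(ā) → ∘` is derivable by
exploring the positive body atoms that block every clause for `R(ā)`, cycles being closed by the
transitivity and loop axioms (12), (13).
-/

namespace ASP

/-- A ground clause `head ← pos, ¬neg` of an answer set program. -/
structure GClause (α : Type) where
  head : α
  pos : List α
  neg : List α

variable {α : Type}

/-- Immediate-consequence operator of the Gelfond–Lifschitz reduct `P^M`:
`F(I) = I ∪ {a | some clause a ← a₁,…,aₙ of P^M has all aᵢ ∈ I}`. -/
def tcons (P : Set (GClause α)) (M : Set α) : Set α →o Set α where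
  toFun I := I ∪ {a | ∃ c ∈ P, c.head = a ∧ (∀ b ∈ c.pos, b ∈ I) ∧ (∀ b ∈ c.neg, b ∉ M)}
  monotone' := by
    intro I J h x hx
    rcases hx with hx | ⟨c, hc, h1, h2, h3⟩
    · exact Or.inl (h hx)
    · exact Or.inr ⟨c, hc, h1, fun b hb => h (h2 b hb), h3⟩

/-- The interpretation `I(P,M)`: least fixed point of the immediate-consequence
operator of the reduct `P^M`. -/
def interp (P : Set (GClause α)) (M : Set α) : Set α := OrderHom.lfp (tcons P M)

/-- `M` is a stable model (answer set) of `P` iff `M = I(P,M)`. -/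
def IsStable (P : Set (GClause α)) (M : Set α) : Prop := M = interp P M

end ASP
namespace ASP

/-- Formulas of minimal implicational propositional logic over atoms `α`. -/
inductive PForm (α : Type) where
  | at_ : α → PForm α
  | imp : PForm α → PForm α → PForm α

/-- Provability in minimal propositional logic (only → introduction/elimination). -/
inductive PPrv {α : Type} : Set (PForm α) → PForm α → Prop
  | ax {Γ : Set (PForm α)} {φ : PForm α} : φ ∈ Γ → PPrv Γ φ
  | impI {Γ : Set (PForm α)} {φ ψ : PForm α} : PPrv (insert φ Γ) ψ → PPrv Γ (.imp φ ψ)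
  | impE {Γ : Set (PForm α)} {φ ψ : PForm α} : PPrv Γ (.imp φ ψ) → PPrv Γ φ → PPrv Γ ψ

end ASP
namespace TR

/-- A ground atom `R(c̄)`: predicate index plus constant arguments. -/
structure GA where
  pred : ℕ
  args : List ℕ
deriving DecidableEq

/-- Atom alphabet of the translated formula φ: for every program predicate `R`
there are `R`, `R̄`, `R!`, `R?`; pair predicates `RP`; clause predicates `K⁰`
and nullary `K̄⁰`; and the nullary `•, ∘, A, B, ⊙`. -/
inductive At where
  | pos : GA → At
  | bar : GA → At
  | bang : GA → At
  | quest : GA → At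
  | mem : GA → GA → At
  | k : ℕ → List ℕ → At
  | kbar : ℕ → At
  | bullet : At
  | circ : At
  | unsound : At
  | incomplete : At
  | lup : At
deriving DecidableEq

abbrev F := ASP.PForm At

def av (a : At) : F := .at_ a

def imps (l : List F) (t : F) : F := l.foldr ASP.PForm.imp t

/-- Axioms (1): `(R(c̄)→⊙) → (R̄(c̄)→⊙) → ⊙`. -/
def ax1 (B : Set GA) : Set F :=
  {f | ∃ a ∈ B, f = .imp (.imp (av (.pos a)) (av .lup)) (.imp (.imp (av (.bar a)) (av .lup)) (av .lup))}

/-- Axioms (2): `Ω→⊙`, `A→⊙`, `B→⊙`. -/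
def ax2 (ω : GA) : Set F :=
  {.imp (av (.pos ω)) (av .lup), .imp (av .unsound) (av .lup), .imp (av .incomplete) (av .lup)}

/-- Axioms (3): `R̄(c̄) → (R!(c̄)→•) → A`. -/
def ax3 (B : Set GA) : Set F :=
  {f | ∃ a ∈ B, f = .imp (av (.bar a)) (.imp (.imp (av (.bang a)) (av .bullet)) (av .unsound))}

/-- Axioms (4): `R(c̄) → (R?(c̄)→∘) → B`. -/
def ax4 (B : Set GA) : Set F :=
  {f | ∃ a ∈ B, f = .imp (av (.pos a)) (.imp (.imp (av (.quest a)) (av .circ)) (av .incomplete))}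

/-- Axiom (5) for a ground clause `R(ē) ← P₁(c̄₁),…,P_r(c̄_r), ¬S₁(d̄₁),…,¬S_s(d̄_s)`:
`R!(ē) → (P₁!(c̄₁)→•) → ⋯ → (P_r!(c̄_r)→•) → S̄₁(d̄₁) → ⋯ → S̄_s(d̄_s) → •`. -/
def clax (c : ASP.GClause GA) : F :=
  .imp (av (.bang c.head))
    (imps (c.pos.map (fun b => .imp (av (.bang b)) (av .bullet)) ++
           c.neg.map (fun s => av (.bar s))) (av .bullet))

def ax5 (Pg : List (ASP.GClause GA)) : Set F := {f | ∃ c ∈ Pg, f = clax c}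

/-- Axioms (6): `R?(c̄) → (K⁰₁(c̄)→K̄⁰₁) → ⋯ → (K⁰_l(c̄)→K̄⁰_l) → ∘`,
where K₁,…,K_l are all clauses whose target predicate is that of the atom. -/
def ax6 (Pg : List (ASP.GClause GA)) (B : Set GA) : Set F :=
  {f | ∃ a ∈ B, f = .imp (av (.quest a))
    (imps (((Pg.zipIdx.map Prod.swap).filter (fun jc => jc.2.head.pred == a.pred)).map
      (fun jc => ASP.PForm.imp (av (.k jc.1 a.args)) (av (.kbar jc.1)))) (av .circ))}

/-- Axioms (7)-(8): a mismatch between the queried arguments and the clause head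
arguments immediately yields `K⁰(c̄) → K̄⁰`. -/
def ax7 (Pg : List (ASP.GClause GA)) (B : Set GA) : Set F :=
  {f | ∃ jc ∈ (Pg.zipIdx.map Prod.swap), ∃ a ∈ B, a.pred = jc.2.head.pred ∧ a.args ≠ jc.2.head.args ∧
    f = .imp (av (.k jc.1 a.args)) (av (.kbar jc.1))}

/-- Axioms (10): `K⁰(ē) → (P?(c̄) → RP(ē,c̄) → ∘) → K̄⁰`, for each positive body atom. -/
def ax10 (Pg : List (ASP.GClause GA)) : Set F :=
  {f | ∃ jc ∈ (Pg.zipIdx.map Prod.swap), ∃ b ∈ jc.2.pos, f = .imp (av (.k jc.1 jc.2.head.args))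
    (.imp (.imp (av (.quest b)) (.imp (av (.mem jc.2.head b)) (av .circ))) (av (.kbar jc.1)))}

/-- Axioms (11): `K⁰(ē) → S(d̄) → K̄⁰`, for each negative body atom `¬S(d̄)`. -/
def ax11 (Pg : List (ASP.GClause GA)) : Set F :=
  {f | ∃ jc ∈ (Pg.zipIdx.map Prod.swap), ∃ s ∈ jc.2.neg, f = .imp (av (.k jc.1 jc.2.head.args))
    (.imp (av (.pos s)) (av (.kbar jc.1)))}

/-- Axioms (12): transitivity `RP(ā,b̄) → PQ(b̄,c̄) → (RQ(ā,c̄)→∘) → ∘`. -/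
def ax12 (B : Set GA) : Set F :=
  {f | ∃ a ∈ B, ∃ b ∈ B, ∃ c ∈ B, f = .imp (av (.mem a b)) (.imp (av (.mem b c))
    (.imp (.imp (av (.mem a c)) (av .circ)) (av .circ)))}

/-- Axioms (13): loop detection `PP(ā,ā) → ∘`. -/
def ax13 (B : Set GA) : Set F := {f | ∃ a ∈ B, f = .imp (av (.mem a a)) (av .circ)}

/-- All axioms of the translated formula φ. -/
def Axioms (Pg : List (ASP.GClause GA)) (B : Set GA) (ω : GA) : Set F :=
  ax1 B ∪ ax2 ω ∪ ax3 B ∪ ax4 B ∪ ax5 Pg ∪ ax6 Pg B ∪ ax7 Pg B ∪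
    ax10 Pg ∪ ax11 Pg ∪ ax12 B ∪ ax13 B

/-- `Γ_M`: the union of `M ∪ M̄` with the axioms of φ. -/
def GammaM (Pg : List (ASP.GClause GA)) (B : Set GA) (ω : GA) (M : Set GA) : Set F :=
  Axioms Pg B ω ∪ {f | ∃ a ∈ M, f = av (.pos a)} ∪ {f | ∃ a ∈ B, a ∉ M ∧ f = av (.bar a)}

/-- The implicational formula of a clause of `P̄` (negative atoms replaced by barred ones). -/
def cbarF (c : ASP.GClause GA) : F :=
  imps (c.pos.map (fun b => av (.pos b)) ++ c.neg.map (fun s => av (.bar s))) (av (.pos c.head))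

/-- The environment `P̄ ∪ M̄`. -/
def PbarMbar (Pg : List (ASP.GClause GA)) (B : Set GA) (M : Set GA) : Set F :=
  {f | ∃ c ∈ Pg, f = cbarF c} ∪ {f | ∃ a ∈ B, a ∉ M ∧ f = av (.bar a)}

def progSet (Pg : List (ASP.GClause GA)) : Set (ASP.GClause GA) := {c | c ∈ Pg}

/-- All atoms of the program lie in the Herbrand base `B`. -/
def WfProg (Pg : List (ASP.GClause GA)) (B : Set GA) : Prop :=
  ∀ c ∈ Pg, c.head ∈ B ∧ (∀ b ∈ c.pos, b ∈ B) ∧ (∀ s ∈ c.neg, s ∈ B)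

end TR

namespace ASP

variable {α : Type}

def PForm.eval (v : α → Prop) : PForm α → Prop
  | .at_ a => v a
  | .imp φ ψ => φ.eval v → ψ.eval v

namespace PPrv

theorem mono {Γ Δ : Set (PForm α)} {φ : PForm α} (h : PPrv Γ φ) (hΓΔ : Γ ⊆ Δ) : PPrv Δ φ := by
  induction h generalizing Δ with
  | ax h => exact .ax (hΓΔ h)
  | impI _ ih => exact .impI (ih (Set.insert_subset_insert hΓΔ))
  | impE _ _ ih₁ ih₂ => exact .impE (ih₁ hΓΔ) (ih₂ hΓΔ)

theorem sound {v : α → Prop} {Γ : Set (PForm α)} {φ : PForm α} (h : PPrv Γ φ)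
    (hΓ : ∀ ψ ∈ Γ, ψ.eval v) : φ.eval v := by
  induction h with
  | ax h => exact hΓ _ h
  | impI _ ih =>
    exact fun hφ => ih fun ψ hψ => (Set.mem_insert_iff.1 hψ).elim (· ▸ hφ) (hΓ ψ)
  | impE _ _ ih₁ ih₂ => exact ih₁ hΓ (ih₂ hΓ)

end PPrv

section Stages

variable (P : Set (GClause α)) (M : Set α)

def stage (n : ℕ) : Set α := (tcons P M)^[n] ∅

noncomputable def rank (a : α) : ℕ := sInf {n | a ∈ stage P M n}

theorem stage_succ (n : ℕ) : stage P M (n + 1) = tcons P M (stage P M n) :=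
  Function.iterate_succ_apply' _ _ _

theorem stage_mono : Monotone (stage P M) :=
  Monotone.monotone_iterate_of_le_map (tcons P M).monotone (Set.empty_subset _)

theorem stage_subset_interp : ∀ n, stage P M n ⊆ interp P M
  | 0 => Set.empty_subset _
  | n + 1 => by rw [stage_succ]; exact OrderHom.map_le_lfp _ (stage_subset_interp n)

variable {P M}

theorem head_mem_interp {c : GClause α} (hc : c ∈ P) (hpos : ∀ b ∈ c.pos, b ∈ interp P M)
    (hneg : ∀ s ∈ c.neg, s ∉ M) : c.head ∈ interp P M := by
  rw [interp, ← OrderHom.map_lfp]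
  exact Or.inr ⟨c, hc, rfl, hpos, hneg⟩

theorem interp_subset_iUnion_stage : interp P M ⊆ ⋃ n, stage P M n := by
  classical
  refine OrderHom.lfp_le _ ?_
  rintro a (ha | ⟨c, hc, rfl, hpos, hneg⟩)
  · exact ha
  · -- bodies are finite, so a single stage contains all of them
    obtain ⟨n, hn⟩ := (stage_mono P M).directed_le.exists_mem_subset_of_finset_subset_biUnion
      (s := c.pos.toFinset) (by simpa [Set.subset_def] using hpos)
    refine Set.mem_iUnion.2 ⟨n + 1, ?_⟩
    rw [stage_succ]
    exact Or.inr ⟨c, hc, rfl, fun b hb => hn (by simpa using hb), hneg⟩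

theorem exists_clause_of_mem_interp {a : α} (ha : a ∈ interp P M) :
    ∃ c ∈ P, c.head = a ∧ (∀ b ∈ c.pos, b ∈ interp P M ∧ rank P M b < rank P M a) ∧
      ∀ s ∈ c.neg, s ∉ M := by
  have hne : {n | a ∈ stage P M n}.Nonempty := Set.mem_iUnion.1 (interp_subset_iUnion_stage ha)
  have hmem : a ∈ stage P M (rank P M a) := Nat.sInf_mem hne
  rcases hr : rank P M a with _ | m
  · rw [hr] at hmem; exact hmem.elim
  rw [hr, stage_succ] at hmem
  rcases hmem with hm | ⟨c, hc, hh, hpos, hneg⟩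
  · exact absurd (hr ▸ Nat.sInf_le hm : m + 1 ≤ m) (Nat.not_succ_le_self m)
  refine ⟨c, hc, hh, fun b hb => ⟨stage_subset_interp P M m (hpos b hb), ?_⟩, hneg⟩
  exact Nat.lt_succ_of_le (Nat.sInf_le (hpos b hb))

end Stages

end ASP

namespace TR

open ASP

theorem eval_imps {v : At → Prop} {l : List F} {t : F} :
    (imps l t).eval v ↔ ((∀ f ∈ l, f.eval v) → t.eval v) := by
  induction l with
  | nil => simp [imps]
  | cons f l ih =>
    simp only [imps, List.foldr_cons, List.forall_mem_cons] at ih ⊢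
    exact ⟨fun h ⟨hf, hl⟩ => ih.1 (h hf) hl, fun h hf => ih.2 fun hl => h ⟨hf, hl⟩⟩

theorem prv_of_imps {Γ : Set F} {l : List F} {t : F} (h : PPrv Γ (imps l t))
    (hl : ∀ f ∈ l, PPrv Γ f) : PPrv Γ t := by
  induction l with
  | nil => exact h
  | cons f l ih =>
    rw [List.forall_mem_cons] at hl
    exact ih (.impE h hl.1) hl.2

theorem prv_imp_of_imps {Γ : Set F} {φ t : F} {l : List F} (h : PPrv Γ (.imp φ (imps l t)))
    (hl : ∀ f ∈ l, PPrv Γ f) : PPrv Γ (.imp φ t) :=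
  .impI <| prv_of_imps (.impE (h.mono (Set.subset_insert _ _)) (.ax (Set.mem_insert _ _)))
    fun f hf => (hl f hf).mono (Set.subset_insert _ _)

theorem mk_mem_zipIdx_map_swap_iff {β : Type} {l : List β} {j : ℕ} {c : β} :
    (j, c) ∈ l.zipIdx.map Prod.swap ↔ l[j]? = some c := by
  simp [List.mk_mem_zipIdx_iff_getElem?]

theorem eq_of_mk_mem_zipIdx_map_swap {β : Type} {l : List β} {j : ℕ} {c c' : β}
    (h : (j, c) ∈ l.zipIdx.map Prod.swap) (h' : c' ∈ l[j]?) : c' = c := by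
  rw [mk_mem_zipIdx_map_swap_iff.1 h, Option.mem_some_iff] at h'
  exact h'.symm

section Countermodel

variable {Pg : List (ASP.GClause GA)} {B : Set GA} {ω : GA} {M : Set GA}

/-- For a stable model `M` omitting `Ω` this valuation satisfies the axioms: `RP(ā, b̄)` says
that `b̄` is derived at an earlier stage than `ā`, and `K̄⁰_j` that clause `j` does not
derive its head from earlier atoms. -/
noncomputable def countermodel (Pg : List (ASP.GClause GA)) (M : Set GA) : At → Prop
  | .pos a | .quest a => a ∈ M
  | .bar a | .bang a => a ∉ M
  | .mem a b => rank (progSet Pg) M b < rank (progSet Pg) M a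
  | .k j args => ∃ c ∈ Pg[j]?, c.head.args = args
  | .kbar j => ¬ ∃ c ∈ Pg[j]?, (∀ b ∈ c.pos, b ∈ M ∧
      rank (progSet Pg) M b < rank (progSet Pg) M c.head) ∧ ∀ s ∈ c.neg, s ∉ M
  | _ => False

theorem eval_clax (hst : IsStable (progSet Pg) M) {c : ASP.GClause GA} (hc : c ∈ Pg) :
    (clax c).eval (countermodel Pg M) := by
  intro hhead
  refine eval_imps.2 fun hbody => hhead ?_
  simp only [List.mem_append, List.mem_map] at hbody
  rw [hst]
  refine head_mem_interp hc (fun b hb => hst ▸ ?_) fun s hs => hbody _ (Or.inr ⟨s, hs, rfl⟩)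
  exact Classical.byContradiction (hbody _ (Or.inl ⟨b, hb, rfl⟩))

theorem eval_ax6 (hst : IsStable (progSet Pg) M) {f : F} (hf : f ∈ ax6 Pg B) :
    f.eval (countermodel Pg M) := by
  obtain ⟨a, -, rfl⟩ := hf
  intro haM
  refine eval_imps.2 fun hall => ?_
  obtain ⟨c, hc, rfl, hpos, hneg⟩ := exists_clause_of_mem_interp (hst ▸ haM : a ∈ _)
  obtain ⟨j, hj⟩ := List.mem_iff_getElem?.1 (show c ∈ Pg from hc)
  have hjc : (j, c) ∈ (Pg.zipIdx.map Prod.swap).filter (·.2.head.pred == c.head.pred) :=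
    List.mem_filter.2 ⟨mk_mem_zipIdx_map_swap_iff.2 hj, by simp⟩
  refine hall _ (List.mem_map_of_mem hjc) ⟨c, hj, rfl⟩ ⟨c, hj, fun b hb => ?_, hneg⟩
  exact ⟨hst ▸ (hpos b hb).1, (hpos b hb).2⟩

theorem eval_countermodel_of_mem_axioms (hst : IsStable (progSet Pg) M) (hω : ω ∉ M) {ψ : F}
    (hψ : ψ ∈ Axioms Pg B ω) : ψ.eval (countermodel Pg M) := by
  simp only [Axioms, Set.mem_union] at hψ
  rcases hψ with (((((((((h | h) | h) | h) | h) | h) | h) | h) | h) | h) | h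
  · obtain ⟨a, -, rfl⟩ := h
    exact fun hpos hbar => hbar fun haM => hpos haM
  · rcases h with rfl | rfl | rfl
    exacts [hω, id, id]
  · obtain ⟨a, -, rfl⟩ := h
    exact fun hbar hbang => hbang hbar
  · obtain ⟨a, -, rfl⟩ := h
    exact fun hpos hquest => hquest hpos
  · obtain ⟨c, hc, rfl⟩ := h
    exact eval_clax hst hc
  · exact eval_ax6 hst h
  · obtain ⟨⟨j, c⟩, hjc, a, -, -, hargs, rfl⟩ := h
    rintro ⟨c', hc', hc'a⟩
    obtain rfl := eq_of_mk_mem_zipIdx_map_swap hjc hc'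
    exact (hargs hc'a.symm).elim
  · obtain ⟨⟨j, c⟩, hjc, b, hb, rfl⟩ := h
    rintro - hb' ⟨c', hc', hpos, -⟩
    obtain rfl := eq_of_mk_mem_zipIdx_map_swap hjc hc'
    exact hb' (hpos b hb).1 (hpos b hb).2
  · obtain ⟨⟨j, c⟩, hjc, s, hs, rfl⟩ := h
    rintro - hsM ⟨c', hc', -, hneg⟩
    obtain rfl := eq_of_mk_mem_zipIdx_map_swap hjc hc'
    exact hneg s hs hsM
  · obtain ⟨a, -, b, -, c, -, rfl⟩ := h
    exact fun hab hbc hac => hac (hbc.trans hab)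
  · obtain ⟨a, -, rfl⟩ := h
    exact (lt_irrefl _)

theorem mem_of_prv_lup (h : PPrv (Axioms Pg B ω) (av .lup)) (hst : IsStable (progSet Pg) M) :
    ω ∈ M :=
  by_contra fun hω => h.sound fun _ hψ => eval_countermodel_of_mem_axioms hst hω hψ

end Countermodel

section Derivations

variable {Pg : List (ASP.GClause GA)} {B : Set GA} {ω : GA} {M : Set GA}

def atoms (Pg : List (ASP.GClause GA)) : Finset GA :=
  (Pg.flatMap fun c => c.head :: (c.pos ++ c.neg)).toFinset

theorem mem_atoms {a : GA} : a ∈ atoms Pg ↔ ∃ c ∈ Pg, a = c.head ∨ a ∈ c.pos ∨ a ∈ c.neg := by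
  simp [atoms]

theorem wfProg_iff_atoms_subset : WfProg Pg B ↔ ↑(atoms Pg) ⊆ B := by
  simp only [WfProg, Set.subset_def, Finset.mem_coe, mem_atoms]
  grind

theorem axioms_mono {B' : Set GA} (h : B ⊆ B') : Axioms Pg B ω ⊆ Axioms Pg B' ω := by
  intro f hf
  simp only [Axioms, ax1, ax3, ax4, ax6, ax7, ax12, ax13, Set.mem_union, Set.mem_ofPred_eq]
    at hf ⊢
  grind

theorem axioms_subset_gammaM : Axioms Pg B ω ⊆ GammaM Pg B ω M :=
  fun _ h => Or.inl (Or.inl h)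

theorem ax1_subset_axioms : ax1 B ⊆ Axioms Pg B ω := by
  intro f hf; simp only [Axioms, Set.mem_union]; tauto
theorem ax2_subset_axioms : ax2 ω ⊆ Axioms Pg B ω := by
  intro f hf; simp only [Axioms, Set.mem_union]; tauto
theorem ax3_subset_axioms : ax3 B ⊆ Axioms Pg B ω := by
  intro f hf; simp only [Axioms, Set.mem_union]; tauto
theorem ax4_subset_axioms : ax4 B ⊆ Axioms Pg B ω := by
  intro f hf; simp only [Axioms, Set.mem_union]; tauto
theorem ax5_subset_axioms : ax5 Pg ⊆ Axioms Pg B ω := by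
  intro f hf; simp only [Axioms, Set.mem_union]; tauto
theorem ax6_subset_axioms : ax6 Pg B ⊆ Axioms Pg B ω := by
  intro f hf; simp only [Axioms, Set.mem_union]; tauto
theorem ax7_subset_axioms : ax7 Pg B ⊆ Axioms Pg B ω := by
  intro f hf; simp only [Axioms, Set.mem_union]; tauto
theorem ax10_subset_axioms : ax10 Pg ⊆ Axioms Pg B ω := by
  intro f hf; simp only [Axioms, Set.mem_union]; tauto
theorem ax11_subset_axioms : ax11 Pg ⊆ Axioms Pg B ω := by
  intro f hf; simp only [Axioms, Set.mem_union]; tauto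
theorem ax12_subset_axioms : ax12 B ⊆ Axioms Pg B ω := by
  intro f hf; simp only [Axioms, Set.mem_union]; tauto
theorem ax13_subset_axioms : ax13 B ⊆ Axioms Pg B ω := by
  intro f hf; simp only [Axioms, Set.mem_union]; tauto

theorem prv_lup_of_forall_subset {S : Finset GA} (hS : ↑S ⊆ B) {Γ : Set F} (hΓ : ax1 B ⊆ Γ)
    (h : ∀ M ⊆ (S : Set GA), PPrv (Γ ∪ {f | ∃ a ∈ M, f = av (.pos a)} ∪
      {f | ∃ a ∈ (S : Set GA), a ∉ M ∧ f = av (.bar a)}) (av .lup)) :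
    PPrv Γ (av .lup) := by
  induction S using Finset.induction_on generalizing Γ with
  | empty => exact (h ∅ (Set.empty_subset _)).mono (by simp)
  | insert a S _ ih =>
    rw [Finset.coe_insert, Set.insert_subset_iff] at hS
    have hΓ' {φ : F} : ax1 B ⊆ insert φ Γ := hΓ.trans (Set.subset_insert _ _)
    refine .impE (.impE (.ax (hΓ ⟨a, hS.1, rfl⟩)) (.impI (ih hS.2 hΓ' fun M hM => ?_)))
      (.impI (ih hS.2 hΓ' fun M hM => ?_))
    · refine (h (insert a M) (by simpa using Set.insert_subset_insert hM)).mono ?_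
      intro f; simp only [Set.mem_union, Set.mem_insert_iff, Set.mem_ofPred_eq, Finset.coe_insert]
      grind
    · refine (h M (hM.trans (by simp))).mono ?_
      intro f; simp only [Set.mem_union, Set.mem_insert_iff, Set.mem_ofPred_eq, Finset.coe_insert]
      grind

theorem prv_bang_imp_bullet (hW : WfProg Pg B) {a : GA} (ha : a ∈ interp (progSet Pg) M) :
    PPrv (GammaM Pg B ω M) (.imp (av (.bang a)) (av .bullet)) := by
  suffices interp (progSet Pg) M ⊆ {a | PPrv (GammaM Pg B ω M) (.imp (av (.bang a)) (av .bullet))}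
    from this ha
  refine OrderHom.lfp_le _ ?_
  rintro _ (ha | ⟨c, hc, rfl, hpos, hneg⟩)
  · exact ha
  refine prv_imp_of_imps (.ax (axioms_subset_gammaM (ax5_subset_axioms ⟨c, hc, rfl⟩))) ?_
  simp only [List.mem_append, List.mem_map]
  rintro _ (⟨b, hb, rfl⟩ | ⟨s, hs, rfl⟩)
  · exact hpos b hb
  · exact .ax (Or.inr ⟨s, (hW c hc).2.2 s hs, hneg s hs, rfl⟩)

theorem prv_k_imp_kbar {Γ : Set F} (hΓ : GammaM Pg B ω M ⊆ Γ) {a : GA} (haB : a ∈ B)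
    (ha : a ∉ interp (progSet Pg) M) {j : ℕ} {c : ASP.GClause GA}
    (hjc : (j, c) ∈ Pg.zipIdx.map Prod.swap) (hpred : c.head.pred = a.pred)
    (hbody : ∀ b ∈ c.pos, b ∉ interp (progSet Pg) M →
      PPrv Γ (.imp (av (.quest b)) (.imp (av (.mem a b)) (av .circ)))) :
    PPrv Γ (.imp (av (.k j a.args)) (av (.kbar j))) := by
  have hax {φ : F} (h : φ ∈ Axioms Pg B ω) : φ ∈ Γ := hΓ (axioms_subset_gammaM h)
  by_cases hargs : c.head.args = a.args
  swap
  · exact .ax (hax (ax7_subset_axioms ⟨(j, c), hjc, a, haB, hpred.symm, Ne.symm hargs, rfl⟩))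
  have hca : c.head = a := by
    rcases hh : c.head with ⟨_, _⟩; rcases a with ⟨_, _⟩; simp_all
  have hc : c ∈ Pg := List.mem_of_getElem? (mk_mem_zipIdx_map_swap_iff.1 hjc)
  have hfire : ¬ ((∀ b ∈ c.pos, b ∈ interp (progSet Pg) M) ∧ ∀ s ∈ c.neg, s ∉ M) :=
    fun ⟨hpos, hneg⟩ => ha (hca ▸ head_mem_interp hc hpos hneg)
  rw [← hargs]
  refine .impI ?_
  by_cases hneg : ∀ s ∈ c.neg, s ∉ M
  · obtain ⟨b, hb, hbI⟩ : ∃ b ∈ c.pos, b ∉ interp (progSet Pg) M := by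
      by_contra! hpos; exact hfire ⟨hpos, hneg⟩
    have h10 := hax (ax10_subset_axioms ⟨(j, c), hjc, b, hb, rfl⟩)
    rw [hca] at h10 ⊢
    exact .impE (.impE (.ax (Set.mem_insert_of_mem _ h10)) (.ax (Set.mem_insert _ _)))
      ((hbody b hb hbI).mono (Set.subset_insert _ _))
  · push Not at hneg
    obtain ⟨s, hs, hsM⟩ := hneg
    have h11 := hax (ax11_subset_axioms ⟨(j, c), hjc, s, hs, rfl⟩)
    exact .impE (.impE (.ax (Set.mem_insert_of_mem _ h11)) (.ax (Set.mem_insert _ _)))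
      (.ax (Set.mem_insert_of_mem _ (hΓ (Or.inl (Or.inr ⟨s, hsM, rfl⟩)))))

/-- `V` holds the atoms visited on the current branch of the descent through blocking positive
bodies; revisiting one closes the branch through the transitivity and loop axioms (12), (13). -/
theorem prv_quest_imp_circ (hW : WfProg Pg B) (V : Finset GA) (hV : ↑V ⊆ B) {Γ : Set F}
    (hΓ : GammaM Pg B ω M ⊆ Γ) {a : GA} (haB : a ∈ B) (ha : a ∉ interp (progSet Pg) M)
    (hloop : ∀ x ∈ V, PPrv Γ (.imp (av (.mem a x)) (av .circ))) :
    PPrv Γ (.imp (av (.quest a)) (av .circ)) := by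
  have hax {φ : F} (h : φ ∈ Axioms Pg B ω) : φ ∈ Γ := hΓ (axioms_subset_gammaM h)
  refine prv_imp_of_imps (.ax (hax (ax6_subset_axioms ⟨a, haB, rfl⟩))) ?_
  intro f hf
  obtain ⟨⟨j, c⟩, hjc, rfl⟩ := List.mem_map.1 hf
  obtain ⟨hjc, hpred⟩ := List.mem_filter.1 hjc
  refine prv_k_imp_kbar hΓ haB ha hjc (beq_iff_eq.1 hpred) fun b hb hbI => ?_
  have hc : c ∈ Pg := List.mem_of_getElem? (mk_mem_zipIdx_map_swap_iff.1 hjc)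
  have hbB : b ∈ B := (hW c hc).2.1 b hb
  refine .impI (.impI ?_)
  by_cases hbV : b ∈ V
  · refine .impE ((hloop b hbV).mono fun _ h => ?_) (.ax (Set.mem_insert _ _))
    exact Set.mem_insert_of_mem _ (Set.mem_insert_of_mem _ h)
  have hbA : b ∈ atoms Pg := mem_atoms.2 ⟨c, hc, Or.inr (Or.inl hb)⟩
  have hloop' : ∀ x ∈ insert b V,
      PPrv (insert (av (.mem a b)) Γ) (.imp (av (.mem b x)) (av .circ)) := by
    intro x hx
    rcases Finset.mem_insert.1 hx with rfl | hx
    · exact .ax (Set.mem_insert_of_mem _ (hax (ax13_subset_axioms ⟨x, hbB, rfl⟩)))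
    have hweaken : Γ ⊆ insert (av (.mem b x)) (insert (av (.mem a b)) Γ) :=
      fun _ h => Set.mem_insert_of_mem _ (Set.mem_insert_of_mem _ h)
    have h12 := hax (ax12_subset_axioms ⟨a, haB, b, hbB, x, hV hx, rfl⟩)
    exact .impI (.impE (.impE (.impE (.ax (hweaken h12))
      (.ax (Set.mem_insert_of_mem _ (Set.mem_insert _ _)))) (.ax (Set.mem_insert _ _)))
      ((hloop x hx).mono hweaken))
  have hrec := prv_quest_imp_circ hW (insert b V)
    (by rw [Finset.coe_insert]; exact Set.insert_subset hbB hV)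
    (hΓ.trans (Set.subset_insert _ Γ)) hbB hbI hloop'
  exact .impE (hrec.mono (Set.insert_subset_insert (Set.subset_insert _ _)))
    (.ax (Set.mem_insert_of_mem _ (Set.mem_insert _ _)))
termination_by (atoms Pg \ V).card
decreasing_by
  rw [Finset.sdiff_insert]
  exact Finset.card_erase_lt_of_mem (Finset.mem_sdiff.2 ⟨hbA, hbV⟩)

theorem gammaM_prv_unsound (hW : WfProg Pg B) {x : GA} (hx : x ∈ interp (progSet Pg) M)
    (hxM : x ∉ M) : PPrv (GammaM Pg B ω M) (av .unsound) := by
  obtain ⟨c, hc, rfl, -⟩ := exists_clause_of_mem_interp hx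
  have hB : c.head ∈ B := (hW c hc).1
  exact .impE (.impE (.ax (axioms_subset_gammaM (ax3_subset_axioms ⟨c.head, hB, rfl⟩)))
    (.ax (Or.inr ⟨c.head, hB, hxM, rfl⟩))) (prv_bang_imp_bullet hW hx)

theorem gammaM_prv_incomplete (hW : WfProg Pg B) (hMB : M ⊆ B) {x : GA} (hx : x ∈ M)
    (hxI : x ∉ interp (progSet Pg) M) : PPrv (GammaM Pg B ω M) (av .incomplete) :=
  .impE (.impE (.ax (axioms_subset_gammaM (ax4_subset_axioms ⟨x, hMB hx, rfl⟩)))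
    (.ax (Or.inl (Or.inr ⟨x, hx, rfl⟩))))
    (prv_quest_imp_circ hW ∅ (by simp) subset_rfl (hMB hx) hxI (by simp))

theorem gammaM_prv_lup (hW : WfProg Pg B) (hMB : M ⊆ B)
    (h : IsStable (progSet Pg) M → ω ∈ M) : PPrv (GammaM Pg B ω M) (av .lup) := by
  have hax2 {φ : F} (hφ : φ ∈ ax2 ω) : φ ∈ GammaM Pg B ω M :=
    axioms_subset_gammaM (ax2_subset_axioms hφ)
  by_cases hω : ω ∈ M
  · exact .impE (.ax (hax2 (by simp [ax2]))) (.ax (Or.inl (Or.inr ⟨ω, hω, rfl⟩)))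
  have hst : M ≠ interp (progSet Pg) M := mt h hω
  by_cases hsound : interp (progSet Pg) M ⊆ M
  · obtain ⟨x, hx, hxI⟩ := Set.not_subset.1 fun h => hst (h.antisymm hsound)
    exact .impE (.ax (hax2 (by simp [ax2]))) (gammaM_prv_incomplete hW hMB hx hxI)
  · obtain ⟨x, hx, hxM⟩ := Set.not_subset.1 hsound
    exact .impE (.ax (hax2 (by simp [ax2]))) (gammaM_prv_unsound hW hx hxM)

end Derivations

end TR

theorem stmt13_general (Pg : List (ASP.GClause TR.GA)) (B : Set TR.GA) (ω : TR.GA)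
    (hW : TR.WfProg Pg B) :
    ASP.PPrv (TR.Axioms Pg B ω) (TR.av .lup) ↔
      ∀ M : Set TR.GA, M ⊆ B → ASP.IsStable (TR.progSet Pg) M → ω ∈ M := by
  refine ⟨fun h M _ hst => TR.mem_of_prv_lup h hst, fun hent => ?_⟩
  have hA : ↑(TR.atoms Pg) ⊆ B := TR.wfProg_iff_atoms_subset.1 hW
  refine (TR.prv_lup_of_forall_subset subset_rfl TR.ax1_subset_axioms fun M hM => ?_).mono
    (TR.axioms_mono hA)
  exact TR.gammaM_prv_lup (TR.wfProg_iff_atoms_subset.2 subset_rfl) hM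
    (hent M (hM.trans hA))

/-- The translated formula φ = ψ₁ → ⋯ → ψ_d → ⊙ is provable (equivalently, ⊙
is derivable from the axioms ψ₁,…,ψ_d) iff P entails Ω under stable model
semantics. -/
theorem stmt13 (Pg : List (ASP.GClause TR.GA)) (B : Set TR.GA) (ω : TR.GA)
    (hW : TR.WfProg Pg B) (hω : ω ∈ B) :
    ASP.PPrv (TR.Axioms Pg B ω) (TR.av .lup) ↔
      ∀ M : Set TR.GA, M ⊆ B → ASP.IsStable (TR.progSet Pg) M → ω ∈ M :=
  stmt13_general Pg B ω hW
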